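/- arXiv:2405.05848 — 3 statements merged into one kernel-verified Lean document; each statement's English description precedes it below -/
import Mathlib

section
/- Let P₁, P₂ be positive definite n×n matrices and α ∈ (0,1). Then the ICI fused inverse covariance P_ICI⁻¹ = P₁⁻¹ + P₂⁻¹ − (α P₁ + (1−α) P₂)⁻¹ is positive definite. -/
/-! Inversion is strictly antitone on positive definite matrices, because
`A⁻¹ - B⁻¹ = (A + A (B - A)⁻¹ A)⁻¹`. With `Q = P₁⁻¹ + P₂⁻¹`, antitonicity applied to `P₁⁻¹ < Q`
and `P₂⁻¹ < Q` gives `Q⁻¹ < P₁` and `Q⁻¹ < P₂`, hence `Q⁻¹ < α P₁ + (1 - α) P₂` by convexity, and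
applied once more, `(α P₁ + (1 - α) P₂)⁻¹ < Q`. -/

open Matrix

namespace Matrix

variable {n K : Type*} [Fintype n] [DecidableEq n] [Field K]

theorem inv_sub_inv_add_eq_inv {A C : Matrix n n K} (hA : IsUnit A.det) (hC : IsUnit C.det)
    (hAC : IsUnit (A + C).det) : A⁻¹ - (A + C)⁻¹ = (A + A * C⁻¹ * A)⁻¹ := by
  have hfactor : A + A * C⁻¹ * A = (A + C) * (C⁻¹ * A) := by
    rw [add_mul, mul_nonsing_inv_cancel_left _ _ hC, Matrix.mul_assoc, add_comm]
  refine (inv_eq_left_inv ?_).symm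
  rw [hfactor, ← Matrix.mul_assoc, sub_mul, nonsing_inv_mul _ hAC, mul_add, nonsing_inv_mul _ hA,
    add_sub_cancel_left, Matrix.mul_assoc, mul_nonsing_inv_cancel_left _ _ hC, nonsing_inv_mul _ hA]

variable [PartialOrder K] [StarRing K] [AddLeftMono K]

theorem PosDef.inv_sub_inv_of_posDef_sub {A B : Matrix n n K} (hA : A.PosDef)
    (hBA : (B - A).PosDef) : (A⁻¹ - B⁻¹).PosDef := by
  have hB : B = A + (B - A) := (add_sub_cancel A B).symm
  rw [hB, inv_sub_inv_add_eq_inv ((isUnit_iff_isUnit_det _).1 hA.isUnit)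
    ((isUnit_iff_isUnit_det _).1 hBA.isUnit) ((isUnit_iff_isUnit_det _).1 (hA.add hBA).isUnit)]
  refine (hA.add ?_).inv
  nth_rewrite 1 [← hA.1]
  exact hBA.inv.conjTranspose_mul_mul_same (mulVec_injective_of_isUnit hA.isUnit)

theorem PosDef.sub_inv_add_inv {A B : Matrix n n K} (hA : A.PosDef) (hB : B.PosDef) :
    (A - (A⁻¹ + B⁻¹)⁻¹).PosDef := by
  simpa [nonsing_inv_nonsing_inv _ ((isUnit_iff_isUnit_det _).1 hA.isUnit)] using
    hA.inv.inv_sub_inv_of_posDef_sub (by simpa using hB.inv)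

end Matrix

theorem stmt7 {n : ℕ} (P₁ P₂ : Matrix (Fin n) (Fin n) ℝ)
    (h₁ : P₁.PosDef) (h₂ : P₂.PosDef) (α : ℝ) (hα : α ∈ Set.Ioo (0 : ℝ) 1) :
    (P₁⁻¹ + P₂⁻¹ - (α • P₁ + (1 - α) • P₂)⁻¹).PosDef := by
  obtain ⟨hα₀, hα₁⟩ := hα
  set Q := P₁⁻¹ + P₂⁻¹
  have hQ : Q.PosDef := h₁.inv.add h₂.inv
  have hQ₁ : (P₁ - Q⁻¹).PosDef := h₁.sub_inv_add_inv h₂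
  have hQ₂ : (P₂ - Q⁻¹).PosDef := by simpa only [Q, add_comm] using h₂.sub_inv_add_inv h₁
  have hconv : α • P₁ + (1 - α) • P₂ - Q⁻¹ = α • (P₁ - Q⁻¹) + (1 - α) • (P₂ - Q⁻¹) := by module
  have hBQ : (α • P₁ + (1 - α) • P₂ - Q⁻¹).PosDef :=
    hconv ▸ (hQ₁.smul hα₀).add (hQ₂.smul (sub_pos.2 hα₁))
  simpa [nonsing_inv_nonsing_inv _ ((isUnit_iff_isUnit_det _).1 hQ.isUnit)] using
    hQ.inv.inv_sub_inv_of_posDef_sub hBQ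
end

section
/- For the small-angle quaternion approximation δq = ((1/2) δΘ, 1) with δΘ = m δθ, m a unit vector, the exact rotation quaternion is (m sin(δθ/2), cos(δθ/2)), and the norm of the difference between the exact quaternion and the normalized approximation (1/√(1 + δθ²/4)) ((1/2) m δθ, 1) is O(δθ³) as δθ → 0; in particular it is bounded by δθ³ for |δθ| ≤ 1. -/
/-!
With `t = δθ / 2`, the normalized approximation `(t • m, 1) / √(1 + t²)` is exactly
`(sin φ • m, cos φ)` for `φ = arctan t`, i.e. the rotation by `2 φ` about the same axis.
Both quaternions are unit vectors in the plane spanned by `(m, 0)` and `(0, 1)`, so their distance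
is a chord, bounded by the arc `|t - arctan t|`; and `|t - arctan t| ≤ |t|³ / 3` since
`t - arctan t` has derivative `t² / (1 + t²) ∈ [0, t²]`.
-/

open Real

lemma sq_sin_sub_sin_add_sq_cos_sub_cos_le (a b : ℝ) :
    (sin a - sin b) ^ 2 + (cos a - cos b) ^ 2 ≤ (a - b) ^ 2 := by
  have hchord : (sin a - sin b) ^ 2 + (cos a - cos b) ^ 2 = 2 * (1 - cos (a - b)) := by
    rw [cos_sub]
    nlinarith [sin_sq_add_cos_sq a, sin_sq_add_cos_sq b]
  rw [hchord]
  linarith [one_sub_sq_div_two_le_cos (x := a - b)]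

lemma hasDerivAt_sub_arctan (t : ℝ) :
    HasDerivAt (fun x => x - arctan x) (t ^ 2 / (1 + t ^ 2)) t := by
  refine ((hasDerivAt_id' t).sub (hasDerivAt_arctan t)).congr_deriv ?_
  field_simp
  ring

lemma monotone_sub_arctan : Monotone fun t : ℝ => t - arctan t :=
  monotone_of_deriv_nonneg (fun t => (hasDerivAt_sub_arctan t).differentiableAt)
    fun t => (hasDerivAt_sub_arctan t).deriv ▸ by positivity

lemma monotone_cube_div_three_sub_sub_arctan :
    Monotone fun t : ℝ => t ^ 3 / 3 - (t - arctan t) := by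
  have hderiv (t : ℝ) :
      HasDerivAt (fun x => x ^ 3 / 3 - (x - arctan x)) (t ^ 4 / (1 + t ^ 2)) t := by
    refine (((hasDerivAt_pow 3 t).div_const 3).sub (hasDerivAt_sub_arctan t)).congr_deriv ?_
    field_simp
    ring
  exact monotone_of_deriv_nonneg (fun t => (hderiv t).differentiableAt)
    fun t => (hderiv t).deriv ▸ by positivity

lemma abs_sub_arctan_le (t : ℝ) : |t - arctan t| ≤ |t| ^ 3 / 3 := by
  rcases le_total 0 t with ht | ht
  · have h₁ : 0 ≤ t - arctan t := by simpa using monotone_sub_arctan ht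
    have h₂ : 0 ≤ t ^ 3 / 3 - (t - arctan t) := by
      simpa using monotone_cube_div_three_sub_sub_arctan ht
    rw [abs_of_nonneg ht, abs_of_nonneg h₁]
    linarith
  · have h₁ : t - arctan t ≤ 0 := by simpa using monotone_sub_arctan ht
    have h₂ : t ^ 3 / 3 - (t - arctan t) ≤ 0 := by
      simpa using monotone_cube_div_three_sub_sub_arctan ht
    rw [abs_of_nonpos ht, abs_of_nonpos h₁, neg_pow, Odd.neg_one_pow (by decide)]
    linarith

/-- The quaternion with vector part `a • m` and scalar part `b`, stored scalar-last. -/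
noncomputable def axisQuat (m : EuclideanSpace ℝ (Fin 3)) (a b : ℝ) : EuclideanSpace ℝ (Fin 4) :=
  (EuclideanSpace.equiv (Fin 4) ℝ).symm ![m 0 * a, m 1 * a, m 2 * a, b]

lemma axisQuat_sub_smul (m : EuclideanSpace ℝ (Fin 3)) (a b c d k : ℝ) :
    axisQuat m a b - k • axisQuat m c d = axisQuat m (a - k * c) (b - k * d) := by
  ext i
  fin_cases i <;> simp [axisQuat] <;> ring

lemma norm_axisQuat (m : EuclideanSpace ℝ (Fin 3)) (a b : ℝ) :
    ‖axisQuat m a b‖ = √(‖m‖ ^ 2 * a ^ 2 + b ^ 2) := by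
  rw [EuclideanSpace.norm_eq, EuclideanSpace.norm_sq_eq]
  simp [axisQuat, Fin.sum_univ_four, Fin.sum_univ_three]
  ring_nf

theorem stmt16_general (m : EuclideanSpace ℝ (Fin 3)) (hm : ‖m‖ = 1) (δθ : ℝ) :
    ‖((EuclideanSpace.equiv (Fin 4) ℝ).symm
        ![m 0 * Real.sin (δθ / 2), m 1 * Real.sin (δθ / 2), m 2 * Real.sin (δθ / 2),
          Real.cos (δθ / 2)] -
      (1 / Real.sqrt (1 + δθ ^ 2 / 4)) •
        (EuclideanSpace.equiv (Fin 4) ℝ).symm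
          ![m 0 * (δθ / 2), m 1 * (δθ / 2), m 2 * (δθ / 2), 1] :
        EuclideanSpace ℝ (Fin 4))‖ ≤ |δθ| ^ 3 := by
  change ‖axisQuat m (sin (δθ / 2)) (cos (δθ / 2)) -
    (1 / √(1 + δθ ^ 2 / 4)) • axisQuat m (δθ / 2) 1‖ ≤ _
  set t := δθ / 2
  have hcos : 1 / √(1 + δθ ^ 2 / 4) = cos (arctan t) := by
    rw [cos_arctan, show t ^ 2 = δθ ^ 2 / 4 by ring]
  have hsin : 1 / √(1 + δθ ^ 2 / 4) * t = sin (arctan t) := by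
    rw [hcos, cos_arctan, sin_arctan, one_div_mul_eq_div]
  rw [axisQuat_sub_smul, norm_axisQuat, hm, hsin, mul_one, hcos, one_pow, one_mul]
  calc √((sin t - sin (arctan t)) ^ 2 + (cos t - cos (arctan t)) ^ 2)
      ≤ √((t - arctan t) ^ 2) := sqrt_le_sqrt (sq_sin_sub_sin_add_sq_cos_sub_cos_le _ _)
    _ = |t - arctan t| := sqrt_sq_eq_abs _
    _ ≤ |t| ^ 3 / 3 := abs_sub_arctan_le t
    _ ≤ |δθ| ^ 3 := by
      rw [show |t| = |δθ| / 2 by simp [t, abs_div]]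
      nlinarith [pow_nonneg (abs_nonneg δθ) 3]

theorem stmt16 (m : EuclideanSpace ℝ (Fin 3)) (hm : ‖m‖ = 1) (δθ : ℝ)
    (hθ : |δθ| ≤ 1) :
    ‖((EuclideanSpace.equiv (Fin 4) ℝ).symm
        ![m 0 * Real.sin (δθ / 2), m 1 * Real.sin (δθ / 2), m 2 * Real.sin (δθ / 2),
          Real.cos (δθ / 2)] -
      (1 / Real.sqrt (1 + δθ ^ 2 / 4)) •
        (EuclideanSpace.equiv (Fin 4) ℝ).symm
          ![m 0 * (δθ / 2), m 1 * (δθ / 2), m 2 * (δθ / 2), 1] :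
        EuclideanSpace ℝ (Fin 4))‖ ≤ |δθ| ^ 3 :=
  stmt16_general m hm δθ
end

section
/- Covariance Intersection is consistent for any correlation: if P₁ ≥ E[e₁e₁ᵀ], P₂ ≥ E[e₂e₂ᵀ] (in the Loewner order) and e_f = P_CI(α P₁⁻¹ e₁ + (1−α) P₂⁻¹ e₂) with P_CI = (α P₁⁻¹ + (1−α) P₂⁻¹)⁻¹, α ∈ [0,1], then P_CI ≥ E[e_f e_fᵀ] regardless of the cross-covariance E[e₁ e₂ᵀ]. -/
open Matrix MeasureTheory

/-- The second-moment matrix `E[u vᵀ]` of two random vectors. -/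
noncomputable def covMatrix {Ω : Type*} [MeasurableSpace Ω] (μ : Measure Ω) {n : ℕ}
    (u v : Ω → Fin n → ℝ) : Matrix (Fin n) (Fin n) ℝ :=
  Matrix.of fun i j => ∫ ω, u ω i * v ω j ∂μ

/-!
Covariance intersection is consistent because the second moment is convex in the error: pointwise
`(α s + (1 - α) t)² ≤ α s² + (1 - α) t²`, so for `α ∈ [0, 1]` and any correlation between `u`
and `v`, `E[(α u + (1 - α) v)(α u + (1 - α) v)ᵀ] ≤ α E[u uᵀ] + (1 - α) E[v vᵀ]` in the Loewner
order. The fused error is `α u + (1 - α) v` with `u = PCI P₁⁻¹ e₁` and `v = PCI P₂⁻¹ e₂`, whose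
second moments are at most `PCI P₁⁻¹ PCI` and `PCI P₂⁻¹ PCI`; the convex combination of these
bounds is `PCI (α P₁⁻¹ + (1 - α) P₂⁻¹) PCI = PCI`.
-/

open scoped MatrixOrder

theorem Matrix.PosDef.smul_add_one_sub_smul {ι : Type*} [Fintype ι] {A B : Matrix ι ι ℝ}
    (hA : A.PosDef) (hB : B.PosDef) {α : ℝ} (hα₀ : 0 ≤ α) (hα₁ : α ≤ 1) :
    (α • A + (1 - α) • B).PosDef := by
  rcases hα₀.eq_or_lt with rfl | hα
  · simpa using hB
  · exact (hA.smul hα).add_posSemidef (hB.posSemidef.smul (sub_nonneg.mpr hα₁))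

theorem Matrix.smul_le_smul_of_nonneg {ι : Type*} [Fintype ι] {A B : Matrix ι ι ℝ} (h : A ≤ B)
    {c : ℝ} (hc : 0 ≤ c) : c • A ≤ c • B := by
  rw [le_iff, ← smul_sub]
  exact h.smul hc

theorem Matrix.mul_mul_transpose_le_mul_mul_transpose {ι κ : Type*} [Fintype ι] [Fintype κ]
    {A B : Matrix ι ι ℝ} (h : A ≤ B) (K : Matrix κ ι ℝ) : K * A * Kᵀ ≤ K * B * Kᵀ := by
  rw [le_iff, ← Matrix.sub_mul, ← Matrix.mul_sub, ← conjTranspose_eq_transpose_of_trivial]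
  exact h.mul_mul_conjTranspose_same K

theorem integral_sq_smul_add_one_sub_smul_le {Ω : Type*} [MeasurableSpace Ω] {μ : Measure Ω}
    {X Y : Ω → ℝ} (hX : Integrable (fun ω => X ω ^ 2) μ) (hY : Integrable (fun ω => Y ω ^ 2) μ)
    (hXY : Integrable (fun ω => X ω * Y ω) μ) {α : ℝ} (hα₀ : 0 ≤ α) (hα₁ : α ≤ 1) :
    ∫ ω, (α * X ω + (1 - α) * Y ω) ^ 2 ∂μ
      ≤ α * ∫ ω, X ω ^ 2 ∂μ + (1 - α) * ∫ ω, Y ω ^ 2 ∂μ := by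
  have hsq : Integrable (fun ω => (α * X ω + (1 - α) * Y ω) ^ 2) μ := by
    have := ((hX.const_mul (α ^ 2)).add (hXY.const_mul (2 * α * (1 - α)))).add
      (hY.const_mul ((1 - α) ^ 2))
    exact this.congr (.of_forall fun ω => by simp only [Pi.add_apply]; ring)
  rw [← integral_const_mul, ← integral_const_mul, ← integral_add (hX.const_mul α)
    (hY.const_mul (1 - α))]
  refine integral_mono hsq ((hX.const_mul α).add (hY.const_mul (1 - α))) fun ω => ?_
  -- convexity of `t ↦ t²`: the gap is `α (1 - α) (X - Y)²`
  nlinarith [mul_nonneg (mul_nonneg hα₀ (sub_nonneg.mpr hα₁)) (sq_nonneg (X ω - Y ω))]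

theorem dotProduct_mul_dotProduct_eq_sum {ι R : Type*} [Fintype ι] [CommSemiring R]
    (a b x y : ι → R) : (a ⬝ᵥ x) * (b ⬝ᵥ y) = ∑ i, ∑ j, a i * b j * (x i * y j) := by
  simp only [dotProduct, Finset.sum_mul_sum]
  exact Finset.sum_congr rfl fun i _ => Finset.sum_congr rfl fun j _ => by ring

section SecondMoments

variable {Ω : Type*} [MeasurableSpace Ω] {μ : Measure Ω} {n : ℕ} {u v : Ω → Fin n → ℝ}

theorem integrable_dotProduct_mul_dotProduct
    (h : ∀ i j, Integrable (fun ω => u ω i * v ω j) μ) (a b : Fin n → ℝ) :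
    Integrable (fun ω => (a ⬝ᵥ u ω) * (b ⬝ᵥ v ω)) μ := by
  simp only [dotProduct_mul_dotProduct_eq_sum]
  exact integrable_finsetSum _ fun i _ => integrable_finsetSum _ fun j _ => (h i j).const_mul _

theorem integrable_mulVec_mul_mulVec {κ : Type*}
    (h : ∀ i j, Integrable (fun ω => u ω i * v ω j) μ) (M N : Matrix κ (Fin n) ℝ) (i j : κ) :
    Integrable (fun ω => (M *ᵥ u ω) i * (N *ᵥ v ω) j) μ :=
  integrable_dotProduct_mul_dotProduct h (M i) (N j)

theorem integrable_smul_add_smul_mul_smul_add_smul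
    (h₁₁ : ∀ i j, Integrable (fun ω => u ω i * u ω j) μ)
    (h₂₂ : ∀ i j, Integrable (fun ω => v ω i * v ω j) μ)
    (h₁₂ : ∀ i j, Integrable (fun ω => u ω i * v ω j) μ) (a b : ℝ) (i j : Fin n) :
    Integrable (fun ω => (a • u ω + b • v ω) i * (a • u ω + b • v ω) j) μ := by
  refine ((((h₁₁ i j).const_mul (a * a)).add ((h₁₂ i j).const_mul (a * b))).add
    (((h₁₂ j i).const_mul (a * b)).add ((h₂₂ i j).const_mul (b * b)))).congr
    (.of_forall fun ω => ?_)
  simp only [Pi.add_apply, Pi.smul_apply, smul_eq_mul]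
  ring

theorem dotProduct_covMatrix_mulVec
    (h : ∀ i j, Integrable (fun ω => u ω i * v ω j) μ) (a b : Fin n → ℝ) :
    a ⬝ᵥ (covMatrix μ u v *ᵥ b) = ∫ ω, (a ⬝ᵥ u ω) * (b ⬝ᵥ v ω) ∂μ := by
  simp only [dotProduct_mul_dotProduct_eq_sum]
  rw [integral_finsetSum _ fun i _ => integrable_finsetSum _ fun j _ => (h i j).const_mul _]
  simp only [dotProduct, mulVec, covMatrix, of_apply, Finset.mul_sum]
  refine Finset.sum_congr rfl fun i _ => ?_
  rw [integral_finsetSum _ fun j _ => (h i j).const_mul _]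
  refine Finset.sum_congr rfl fun j _ => ?_
  rw [integral_const_mul]
  ring

theorem isHermitian_covMatrix (u : Ω → Fin n → ℝ) : (covMatrix μ u u).IsHermitian := by
  ext i j
  simp [covMatrix, mul_comm]

theorem covMatrix_mulVec (h : ∀ i j, Integrable (fun ω => u ω i * v ω j) μ)
    (M N : Matrix (Fin n) (Fin n) ℝ) :
    covMatrix μ (fun ω => M *ᵥ u ω) (fun ω => N *ᵥ v ω) = M * covMatrix μ u v * Nᵀ := by
  ext i j
  calc ∫ ω, (M i ⬝ᵥ u ω) * (N j ⬝ᵥ v ω) ∂μ = M i ⬝ᵥ (covMatrix μ u v *ᵥ N j) :=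
        (dotProduct_covMatrix_mulVec h _ _).symm
    _ = (M * covMatrix μ u v * Nᵀ) i j := by rw [mul_assoc, mul_apply']; rfl

theorem covMatrix_smul_add_one_sub_smul_le
    (h₁₁ : ∀ i j, Integrable (fun ω => u ω i * u ω j) μ)
    (h₂₂ : ∀ i j, Integrable (fun ω => v ω i * v ω j) μ)
    (h₁₂ : ∀ i j, Integrable (fun ω => u ω i * v ω j) μ) {α : ℝ} (hα₀ : 0 ≤ α) (hα₁ : α ≤ 1) :
    covMatrix μ (fun ω => α • u ω + (1 - α) • v ω) (fun ω => α • u ω + (1 - α) • v ω)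
      ≤ α • covMatrix μ u u + (1 - α) • covMatrix μ v v := by
  refine .of_dotProduct_mulVec_nonneg (((isHermitian_covMatrix u).smul (.all α)).add
    ((isHermitian_covMatrix v).smul (.all (1 - α))) |>.sub (isHermitian_covMatrix _)) fun x => ?_
  rw [star_trivial, sub_mulVec, dotProduct_sub, sub_nonneg, add_mulVec, dotProduct_add,
    smul_mulVec, smul_mulVec, dotProduct_smul, dotProduct_smul, smul_eq_mul, smul_eq_mul,
    dotProduct_covMatrix_mulVec (integrable_smul_add_smul_mul_smul_add_smul h₁₁ h₂₂ h₁₂ α (1 - α)),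
    dotProduct_covMatrix_mulVec h₁₁, dotProduct_covMatrix_mulVec h₂₂]
  simp only [dotProduct_add, dotProduct_smul, smul_eq_mul, ← sq]
  exact integral_sq_smul_add_one_sub_smul_le
    (by simpa only [sq] using integrable_dotProduct_mul_dotProduct h₁₁ x x)
    (by simpa only [sq] using integrable_dotProduct_mul_dotProduct h₂₂ x x)
    (integrable_dotProduct_mul_dotProduct h₁₂ x x) hα₀ hα₁

end SecondMoments

theorem stmt18_general {Ω : Type*} [MeasurableSpace Ω] (μ : Measure Ω)
    {n : ℕ} (e₁ e₂ : Ω → Fin n → ℝ)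
    (hint₁₁ : ∀ i j, Integrable (fun ω => e₁ ω i * e₁ ω j) μ)
    (hint₂₂ : ∀ i j, Integrable (fun ω => e₂ ω i * e₂ ω j) μ)
    (hint₁₂ : ∀ i j, Integrable (fun ω => e₁ ω i * e₂ ω j) μ)
    (P₁ P₂ : Matrix (Fin n) (Fin n) ℝ) (h₁ : P₁.PosDef) (h₂ : P₂.PosDef)
    (hcons₁ : (P₁ - covMatrix μ e₁ e₁).PosSemidef)
    (hcons₂ : (P₂ - covMatrix μ e₂ e₂).PosSemidef)
    (α : ℝ) (hα : α ∈ Set.Icc (0 : ℝ) 1)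
    (PCI : Matrix (Fin n) (Fin n) ℝ) (hPCI : PCI = (α • P₁⁻¹ + (1 - α) • P₂⁻¹)⁻¹)
    (ef : Ω → Fin n → ℝ)
    (hef : ∀ ω, ef ω = PCI *ᵥ (α • (P₁⁻¹ *ᵥ e₁ ω) + (1 - α) • (P₂⁻¹ *ᵥ e₂ ω))) :
    (PCI - covMatrix μ ef ef).PosSemidef := by
  obtain ⟨hα₀, hα₁⟩ := hα
  have hA := h₁.inv.smul_add_one_sub_smul h₂.inv hα₀ hα₁
  have hPCI_mul : (α • P₁⁻¹ + (1 - α) • P₂⁻¹) * PCI = 1 :=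
    hPCI ▸ mul_nonsing_inv _ hA.det_pos.ne'.isUnit
  have transpose_eq {Q : Matrix (Fin n) (Fin n) ℝ} (hQ : Q.IsHermitian) : Qᵀ = Q := by
    rw [← conjTranspose_eq_transpose_of_trivial, hQ.eq]
  have gain_bound {P : Matrix (Fin n) (Fin n) ℝ} (hP : P.PosDef) :
      PCI * P⁻¹ * P * (PCI * P⁻¹)ᵀ = PCI * P⁻¹ * PCI := by
    rw [transpose_mul, transpose_eq hP.inv.isHermitian,
      transpose_eq (hPCI ▸ hA.isHermitian.inv), Matrix.mul_assoc PCI, nonsing_inv_mul _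
      hP.det_pos.ne'.isUnit, Matrix.mul_one, Matrix.mul_assoc]
  have hef' : ef = fun ω => α • ((PCI * P₁⁻¹) *ᵥ e₁ ω) + (1 - α) • ((PCI * P₂⁻¹) *ᵥ e₂ ω) :=
    funext fun ω => by rw [hef, mulVec_add, mulVec_smul, mulVec_smul, mulVec_mulVec, mulVec_mulVec]
  rw [← le_iff, hef']
  calc _ ≤ α • covMatrix μ (fun ω => (PCI * P₁⁻¹) *ᵥ e₁ ω) (fun ω => (PCI * P₁⁻¹) *ᵥ e₁ ω)
        + (1 - α) • covMatrix μ (fun ω => (PCI * P₂⁻¹) *ᵥ e₂ ω) (fun ω => (PCI * P₂⁻¹) *ᵥ e₂ ω) :=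
        covMatrix_smul_add_one_sub_smul_le (integrable_mulVec_mul_mulVec hint₁₁ _ _)
          (integrable_mulVec_mul_mulVec hint₂₂ _ _) (integrable_mulVec_mul_mulVec hint₁₂ _ _)
          hα₀ hα₁
    _ ≤ α • (PCI * P₁⁻¹ * P₁ * (PCI * P₁⁻¹)ᵀ) + (1 - α) • (PCI * P₂⁻¹ * P₂ * (PCI * P₂⁻¹)ᵀ) := by
        rw [covMatrix_mulVec hint₁₁, covMatrix_mulVec hint₂₂]
        exact add_le_add
          (smul_le_smul_of_nonneg (mul_mul_transpose_le_mul_mul_transpose hcons₁ _) hα₀)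
          (smul_le_smul_of_nonneg (mul_mul_transpose_le_mul_mul_transpose hcons₂ _)
            (sub_nonneg.mpr hα₁))
    _ = PCI * ((α • P₁⁻¹ + (1 - α) • P₂⁻¹) * PCI) := by
        rw [gain_bound h₁, gain_bound h₂]
        simp only [Matrix.mul_add, Matrix.add_mul, Matrix.mul_smul, Matrix.smul_mul,
          Matrix.mul_assoc]
    _ = PCI := by rw [hPCI_mul, Matrix.mul_one]

theorem stmt18 {Ω : Type*} [MeasurableSpace Ω] (μ : Measure Ω)
    [IsProbabilityMeasure μ] {n : ℕ} (e₁ e₂ : Ω → Fin n → ℝ)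
    (hmean₁ : ∀ i, ∫ ω, e₁ ω i ∂μ = 0) (hmean₂ : ∀ i, ∫ ω, e₂ ω i ∂μ = 0)
    (hint₁₁ : ∀ i j, Integrable (fun ω => e₁ ω i * e₁ ω j) μ)
    (hint₂₂ : ∀ i j, Integrable (fun ω => e₂ ω i * e₂ ω j) μ)
    (hint₁₂ : ∀ i j, Integrable (fun ω => e₁ ω i * e₂ ω j) μ)
    (P₁ P₂ : Matrix (Fin n) (Fin n) ℝ) (h₁ : P₁.PosDef) (h₂ : P₂.PosDef)
    (hcons₁ : (P₁ - covMatrix μ e₁ e₁).PosSemidef)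
    (hcons₂ : (P₂ - covMatrix μ e₂ e₂).PosSemidef)
    (α : ℝ) (hα : α ∈ Set.Icc (0 : ℝ) 1)
    (PCI : Matrix (Fin n) (Fin n) ℝ) (hPCI : PCI = (α • P₁⁻¹ + (1 - α) • P₂⁻¹)⁻¹)
    (ef : Ω → Fin n → ℝ)
    (hef : ∀ ω, ef ω = PCI *ᵥ (α • (P₁⁻¹ *ᵥ e₁ ω) + (1 - α) • (P₂⁻¹ *ᵥ e₂ ω))) :
    (PCI - covMatrix μ ef ef).PosSemidef :=
  stmt18_general μ e₁ e₂ hint₁₁ hint₂₂ hint₁₂ P₁ P₂ h₁ h₂ hcons₁ hcons₂ α hα PCI hPCI ef hef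
end
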